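/- If the interval [p, q] contains (covers) two or more distinct MUPSs of T, then T has no SUPS for [p, q]. -/

import Mathlib

/-- The substring T[i..j] of T (1-indexed, inclusive). -/
def sub (T : List Char) (i j : ℕ) : List Char := (T.drop (i-1)).take (j+1-i)

/-- A string is a palindrome if it equals its reversal. -/
def IsPal (w : List Char) : Prop := w.reverse = w

/-- p is a period of w: 0 < p ≤ |w| and w[k] = w[k+p] for all valid k (0-indexed). -/
def HasPeriod (w : List Char) (p : ℕ) : Prop :=
  0 < p ∧ p ≤ w.length ∧ ∀ k, k + p < w.length → w[k]? = w[k + p]?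

/-- u occurs in T at (1-indexed) position i. -/
def OccursAt (u T : List Char) (i : ℕ) : Prop :=
  1 ≤ i ∧ i + u.length - 1 ≤ T.length ∧ sub T i (i + u.length - 1) = u

/-- u is unique in T: nonempty and occurs at exactly one position. -/
def UniqueIn (u T : List Char) : Prop := u ≠ [] ∧ ∃! i, OccursAt u T i

/-- u occurs at least twice in T. -/
def OccursTwice (u T : List Char) : Prop := ∃ i j, i ≠ j ∧ OccursAt u T i ∧ OccursAt u T j

/-- T[i..j] is a (nonempty, in-bounds) palindromic substring of T. -/
def IsPalSub (T : List Char) (i j : ℕ) : Prop :=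
  1 ≤ i ∧ i ≤ j ∧ j ≤ T.length ∧ IsPal (sub T i j)

/-- T[i..j] is a shortest unique palindromic substring of T for the interval [p,q]. -/
def IsSUPS (T : List Char) (p q i j : ℕ) : Prop :=
  IsPalSub T i j ∧ UniqueIn (sub T i j) T ∧ i ≤ p ∧ q ≤ j ∧
  ∀ i' j', IsPalSub T i' j' → UniqueIn (sub T i' j') T → i' ≤ p → q ≤ j' →
    j + 1 - i ≤ j' + 1 - i'

/-- T[i..j] is a minimal unique palindromic substring of T. -/
def IsMUPS (T : List Char) (i j : ℕ) : Prop :=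
  IsPalSub T i j ∧ UniqueIn (sub T i j) T ∧ ¬ UniqueIn (sub T (i+1) (j-1)) T

lemma sub_length (T : List Char) (x y : ℕ) (h1 : 1 ≤ x) (hy : y ≤ T.length) :
    (sub T x y).length = y + 1 - x := by
  simp [sub]; omega

lemma occ_iff (u T : List Char) (a : ℕ) (hu : u ≠ []) :
    OccursAt u T a ↔ 1 ≤ a ∧ a - 1 + u.length ≤ T.length ∧ (T.drop (a-1)).take u.length = u := by
  have hl : 0 < u.length := List.length_pos_iff.mpr hu
  unfold OccursAt sub
  constructor <;> rintro ⟨h1, h2, h3⟩ <;> refine ⟨h1, by omega, ?_⟩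
  · rw [show u.length = (a + u.length - 1) + 1 - a by omega]; exact h3
  · rw [show (a + u.length - 1) + 1 - a = u.length by omega]; exact h3

lemma emb (T : List Char) (x d m L : ℕ) (h : d + m ≤ L) :
    (((T.drop x).take L).drop d).take m = (T.drop (x + d)).take m := by
  rw [List.drop_take, List.take_take, List.drop_drop]
  congr 1
  omega

lemma rev_seg (w : List Char) (d m : ℕ) (h : d + m ≤ w.length) :
    ((w.drop d).take m).reverse = (w.reverse.drop (w.length - d - m)).take m := by
  rw [List.reverse_take, List.reverse_drop, List.drop_take, List.length_drop]
  congr 1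
  omega

lemma occ_self (T : List Char) (a b : ℕ) (h1 : 1 ≤ a) (h2 : a ≤ b) (h3 : b ≤ T.length) :
    OccursAt (sub T a b) T a := by
  have hlen := sub_length T a b h1 h3
  have hne : sub T a b ≠ [] := by
    intro h
    rw [h] at hlen
    simp only [List.length_nil] at hlen
    omega
  rw [occ_iff _ _ _ hne, hlen]
  refine ⟨h1, by omega, ?_⟩
  rfl

lemma unique_eq {u T : List Char} (hu : UniqueIn u T) {a b : ℕ}
    (ha : OccursAt u T a) (hb : OccursAt u T b) : a = b := by
  obtain ⟨-, c, -, hc⟩ := hu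
  rw [hc a ha, hc b hb]

/-- Mirror lemma: a palindrome occurring inside a palindromic occurrence also occurs at
the mirrored position. -/
lemma mirror (T u : List Char) (x y a : ℕ) (hu : u ≠ []) (hpu : IsPal u)
    (hx : 1 ≤ x) (hxy : x ≤ y) (hyT : y ≤ T.length) (hw : IsPal (sub T x y))
    (hocc : OccursAt u T a) (hxa : x ≤ a) (hay : a - 1 + u.length ≤ y) :
    OccursAt u T (x + y + 1 - (a + u.length)) := by
  have hul : 0 < u.length := List.length_pos_iff.mpr hu
  rw [occ_iff _ _ _ hu] at hocc ⊢
  obtain ⟨ha1, haT, hseg⟩ := hocc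
  unfold IsPal at hpu hw
  set w : List Char := sub T x y with hwdef
  have hwl : w.length = y + 1 - x := sub_length T x y hx hyT
  set d := a - x with hd
  have hdm : d + u.length ≤ w.length := by omega
  have h1 : (w.drop d).take u.length = u := by
    rw [hwdef]; unfold sub
    rw [emb T (x-1) d u.length (y+1-x) (by omega)]
    rw [show x - 1 + d = a - 1 by omega]
    exact hseg
  have h2 : (w.drop (w.length - d - u.length)).take u.length = u := by
    have h3 := rev_seg w d u.length hdm
    rw [h1, hpu, hw] at h3
    exact h3.symm
  have h4 := emb T (x-1) (w.length - d - u.length) u.length (y+1-x) (by omega)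
  rw [show ((T.drop (x-1)).take (y+1-x)) = w from rfl] at h4
  refine ⟨by omega, by omega, ?_⟩
  rw [show x + y + 1 - (a + u.length) - 1 = x - 1 + (w.length - d - u.length) by omega, ← h4]
  exact h2

/-- A superstring occurrence of a unique string is unique. -/
lemma super_unique (T u : List Char) (a x y : ℕ) (hu : UniqueIn u T)
    (hocc : OccursAt u T a) (hx1 : 1 ≤ x) (hxa : x ≤ a) (hay : a - 1 + u.length ≤ y)
    (hyT : y ≤ T.length) : UniqueIn (sub T x y) T := by
  have hul : 0 < u.length := List.length_pos_iff.mpr hu.1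
  rw [occ_iff _ _ _ hu.1] at hocc
  obtain ⟨ha1, haT, hseg⟩ := hocc
  have hxy : x ≤ y := by omega
  have hlen := sub_length T x y hx1 hyT
  have hne : sub T x y ≠ [] := by
    intro h; rw [h] at hlen; simp only [List.length_nil] at hlen; omega
  refine ⟨hne, x, occ_self T x y hx1 hxy hyT, ?_⟩
  intro x' hx'
  rw [occ_iff _ _ _ hne, hlen] at hx'
  obtain ⟨hx'1, hx'T, hx'seg⟩ := hx'
  -- u occurs at x' + (a - x)
  have h5 : OccursAt u T (x' + (a - x)) := by
    rw [occ_iff _ _ _ hu.1]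
    refine ⟨by omega, by omega, ?_⟩
    have h6 := emb T (x'-1) (a-x) u.length (y+1-x) (by omega)
    rw [hx'seg] at h6
    have h7 : ((sub T x y).drop (a-x)).take u.length = u := by
      unfold sub
      rw [emb T (x-1) (a-x) u.length (y+1-x) (by omega),
        show x - 1 + (a - x) = a - 1 by omega]
      exact hseg
    rw [show x' + (a - x) - 1 = x' - 1 + (a - x) by omega, ← h6]
    exact h7
  have h8 : OccursAt u T a := by
    rw [occ_iff _ _ _ hu.1]; exact ⟨ha1, haT, hseg⟩
  have := unique_eq hu h5 h8
  omega

/-- If [p,q] covers two distinct MUPSs, then there is no SUPS for [p,q]. -/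
theorem two_covered_mups_no_sups (T : List Char) (p q i₁ j₁ i₂ j₂ : ℕ)
    (h1 : IsMUPS T i₁ j₁) (h2 : IsMUPS T i₂ j₂) (hne : (i₁, j₁) ≠ (i₂, j₂))
    (c1 : p ≤ i₁) (c2 : j₁ ≤ q) (c3 : p ≤ i₂) (c4 : j₂ ≤ q) :
    ∀ i j, ¬ IsSUPS T p q i j := by
  intro i j hs
  obtain ⟨⟨hi1, hij, hjT, hpal⟩, -, hip, hqj, -⟩ := hs
  obtain ⟨⟨ha1, hab1, hbT1, hp1⟩, hu1, hn1⟩ := h1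
  obtain ⟨⟨ha2, hab2, hbT2, hp2⟩, hu2, hn2⟩ := h2
  have l1 := sub_length T i₁ j₁ ha1 hbT1
  have l2 := sub_length T i₂ j₂ ha2 hbT2
  have o1 := occ_self T i₁ j₁ ha1 hab1 hbT1
  have o2 := occ_self T i₂ j₂ ha2 hab2 hbT2
  have m1 := mirror T (sub T i₁ j₁) i j i₁ hu1.1 hp1 hi1 hij hjT hpal o1
    (by omega) (by rw [l1]; omega)
  have m2 := mirror T (sub T i₂ j₂) i j i₂ hu2.1 hp2 hi1 hij hjT hpal o2
    (by omega) (by rw [l2]; omega)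
  have e1 := unique_eq hu1 o1 m1
  have e2 := unique_eq hu2 o2 m2
  rw [l1] at e1
  rw [l2] at e2
  have s1 : i₁ + j₁ = i + j := by omega
  have s2 : i₂ + j₂ = i + j := by omega
  rcases Nat.lt_trichotomy i₁ i₂ with h | h | h
  · exact hn1 (super_unique T (sub T i₂ j₂) i₂ (i₁+1) (j₁-1) hu2 o2 (by omega) (by omega)
      (by rw [l2]; omega) (by omega))
  · exact hne (by rw [h, show j₁ = j₂ by omega])
  · exact hn2 (super_unique T (sub T i₁ j₁) i₁ (i₂+1) (j₂-1) hu1 o1 (by omega) (by omega)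
      (by rw [l1]; omega) (by omega))
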